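/- arXiv:2410.06909 — 2 statements merged into one kernel-verified Lean document; each statement's English description precedes it below -/
import Mathlib

section
/- Let E and F be pseudo-normed real vector spaces, let s_0 < s < s_1 be real numbers, q ∈ [1,∞], r > 0, and let Φ : B_{s,q}(0,r) → Σ^{s_0}_∞(F) satisfy the weak Lipschitz and tame estimates. Then for every f ∈ B_{s,q}(0,r), Φ(f) belongs to Σ^s_q(F), the sequences Φ(S_n f) are well-defined for all n ∈ ℕ, and Φ(S_n f) converges to Φ(f) in Σ^s_q(F), i.e. ‖Φ(f) − Φ(S_n f)‖_{Σ^s_q(F)} → 0 as n → ∞. -/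
open Filter
open scoped ENNReal NNReal

/-- A pseudo-norm on a real vector space: nonnegative, symmetric, subadditive,
and vanishing exactly at `0`. -/
structure IsPseudoNorm {E : Type*} [AddCommGroup E] [Module ℝ E] (N : E → ℝ) : Prop where
  nonneg : ∀ x, 0 ≤ N x
  neg : ∀ x, N (-x) = N x
  add_le : ∀ x y, N (x + y) ≤ N x + N y
  eq_zero_iff : ∀ x, N x = 0 ↔ x = 0

/-- The `Σ^s_q(E)` pseudo-norm of a sequence `f : ℕ → E`:
`(∑_k 2^{qks} ‖f_k‖_E^q)^{1/q}` for `q < ∞` and `sup_k 2^{ks} ‖f_k‖_E` for `q = ∞`. -/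
noncomputable def sigmaNorm {E : Type*} (N : E → ℝ) (s : ℝ) (q : ℝ≥0∞) (f : ℕ → E) : ℝ≥0∞ :=
  if q = ⊤ then ⨆ k : ℕ, ENNReal.ofReal ((2 : ℝ) ^ ((k : ℝ) * s) * N (f k))
  else (∑' k : ℕ, ENNReal.ofReal ((2 : ℝ) ^ ((k : ℝ) * s) * N (f k)) ^ q.toReal) ^ (1 / q.toReal)

/-- Membership in `Σ^s_q(E)`: finiteness of the norm when `q < ∞`, and
`2^{ks}‖f_k‖_E → 0` when `q = ∞`. -/
def memSigma {E : Type*} (N : E → ℝ) (s : ℝ) (q : ℝ≥0∞) (f : ℕ → E) : Prop :=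
  if q = ⊤ then Tendsto (fun k : ℕ => (2 : ℝ) ^ ((k : ℝ) * s) * N (f k)) atTop (nhds 0)
  else sigmaNorm N s q f < ⊤

/-- Friedrichs smoothing operator `S_n`: truncation of a sequence after index `n`. -/
def smoothS {E : Type*} [Zero E] (n : ℕ) (f : ℕ → E) : ℕ → E :=
  fun k => if k ≤ n then f k else 0

/-!
Write `a_k = 2^{ks}‖f_k‖`, `ρ₀ = 2^{s₀-s} < 1` and `ρ₁ = 2^{s-s₁} < 1`. At a frequency
`k ≤ n + 1` the weak Lipschitz estimate for `f` and `S_n f` bounds `2^{ks}‖Φ(f)_k - Φ(S_n f)_k‖`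
by `C₀ ∑_{j > n} ρ₀^{j-k} a_j`. At a frequency `k > n + 1` we pass through `S_{k-1} f`: its
difference with `f` is again a low-frequency term, while `Φ(S_{k-1} f)_k` and `Φ(S_n f)_k` are
controlled by the tame estimate, which gives `2^{ks}‖Φ(S_t f)_k‖ ≤ C₁ ρ₁^{k-t} W_t` for `t ≤ k`,
with `W_t = ∑_{j ≤ t} ρ₁^{t-j} a_j`. So `Φ(f) - Φ(S_n f)` is dominated by geometric convolutions
of the tails of `a` and of `W` beyond `n`. Geometric convolutions are bounded on `ℓ^q` and preserve
the sequences whose tails vanish in norm (all of `ℓ^q` for `q < ∞`, and `c₀` for `q = ∞`), which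
gives both the membership of `Φ(f)` and the convergence.
-/

open Topology MeasureTheory Set

namespace ENNReal

lemma iSup_rpow_of_pos {ι : Sort*} (x : ι → ℝ≥0∞) {y : ℝ} (hy : 0 < y) :
    (⨆ i, x i) ^ y = ⨆ i, x i ^ y :=
  (orderIsoRpow y hy).map_iSup x

lemma inv_one_sub_ne_top {ρ : ℝ≥0∞} (hρ : ρ < 1) : (1 - ρ)⁻¹ ≠ ∞ :=
  inv_ne_top.2 (tsub_pos_of_lt hρ).ne'

lemma tendsto_tsum_of_dominated {F : ℕ → ℕ → ℝ≥0∞} {g bound : ℕ → ℝ≥0∞}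
    (h_bound : ∀ n d, F n d ≤ bound d) (h_fin : ∑' d, bound d ≠ ∞)
    (h_lim : ∀ d, Tendsto (F · d) atTop (𝓝 (g d))) :
    Tendsto (fun n => ∑' d, F n d) atTop (𝓝 (∑' d, g d)) := by
  simp_rw [← lintegral_count]
  exact tendsto_lintegral_of_dominated_convergence bound (fun _ => measurable_of_countable _)
    (fun n => ae_of_all _ (h_bound n)) (by rwa [lintegral_count]) (ae_of_all _ h_lim)

lemma two_rpow_mul_two_rpow_eq_pow {i j : ℕ} (hij : i ≤ j) (σ τ : ℝ) :
    (2 : ℝ≥0∞) ^ ((i : ℝ) * (σ - τ)) * 2 ^ ((j : ℝ) * (τ - σ)) = (2 ^ (τ - σ)) ^ (j - i) := by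
  rw [← rpow_add _ _ two_ne_zero ofNat_ne_top, ← rpow_natCast, ← rpow_mul, Nat.cast_sub hij]
  ring_nf

end ENNReal

section SequenceNorm

variable {q : ℝ≥0∞}

lemma eLpNorm_count_top (u : ℕ → ℝ≥0∞) : eLpNorm u ∞ Measure.count = ⨆ k, u k := by
  simp [eLpNorm_exponent_top, eLpNormEssSup_eq_iSup]

lemma eLpNorm_count_eq_tsum (hq0 : q ≠ 0) (hq : q ≠ ∞) (u : ℕ → ℝ≥0∞) :
    eLpNorm u q Measure.count = (∑' k, u k ^ q.toReal) ^ (1 / q.toReal) := by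
  simp [eLpNorm_eq_lintegral_rpow_enorm_toReal hq0 hq, lintegral_count]

lemma eLpNorm_count_const_mul_le {c : ℝ≥0∞} (hc : c ≠ ∞) (u : ℕ → ℝ≥0∞) :
    eLpNorm (fun k => c * u k) q Measure.count ≤ c * eLpNorm u q Measure.count := by
  lift c to ℝ≥0 using hc
  exact eLpNorm_le_nnreal_smul_eLpNorm_of_ae_le_mul' (ae_of_all _ fun _ => le_rfl) q

lemma eLpNorm_count_add_le (hq : 1 ≤ q) (u v : ℕ → ℝ≥0∞) :
    eLpNorm (u + v) q Measure.count ≤ eLpNorm u q Measure.count + eLpNorm v q Measure.count :=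
  eLpNorm_add_le (measurable_of_countable u).aestronglyMeasurable
    (measurable_of_countable v).aestronglyMeasurable hq

lemma eLpNorm_count_comp_le {e : ℕ → ℕ} (he : e.Injective) (u : ℕ → ℝ≥0∞) :
    eLpNorm (u ∘ e) q Measure.count ≤ eLpNorm u q Measure.count := by
  rcases eq_or_ne q 0 with rfl | hq0
  · simp
  rcases eq_or_ne q ∞ with rfl | hq
  · simp only [eLpNorm_count_top]
    exact iSup_comp_le u e
  · simp only [eLpNorm_count_eq_tsum hq0 hq]
    exact ENNReal.rpow_le_rpow (ENNReal.tsum_comp_le_tsum_of_injective he (u · ^ q.toReal))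
      (by positivity)

lemma eLpNorm_count_eq_comp {e : ℕ → ℕ} (he : e.Injective) {u : ℕ → ℝ≥0∞}
    (hu : ∀ k ∉ range e, u k = 0) :
    eLpNorm u q Measure.count = eLpNorm (u ∘ e) q Measure.count := by
  refine le_antisymm ?_ (eLpNorm_count_comp_le he u)
  rcases eq_or_ne q 0 with rfl | hq0
  · simp
  rcases eq_or_ne q ∞ with rfl | hq
  · simp only [eLpNorm_count_top]
    refine iSup_le fun k => ?_
    by_cases hk : k ∈ range e
    · obtain ⟨m, rfl⟩ := hk
      exact le_iSup (u ∘ e) m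
    · simp [hu k hk]
  · simp only [eLpNorm_count_eq_tsum hq0 hq]
    rw [← he.tsum_eq]
    · rfl
    · intro k hk
      by_contra hk'
      simp [hu k hk', ENNReal.zero_rpow_of_pos (ENNReal.toReal_pos hq0 hq)] at hk

lemma eLpNorm_tsum_le (hq : 1 ≤ q) (g : ℕ → ℕ → ℝ≥0∞) :
    eLpNorm (fun k => ∑' j, g j k) q Measure.count ≤ ∑' j, eLpNorm (g j) q Measure.count := by
  rcases eq_or_ne q ∞ with rfl | hq_top
  · simp only [eLpNorm_count_top]
    exact iSup_le fun k => ENNReal.tsum_le_tsum fun j => le_iSup (g j) k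
  have hq0 : q ≠ 0 := (zero_lt_one.trans_le hq).ne'
  have hr : 0 < q.toReal := ENNReal.toReal_pos hq0 hq_top
  set S : ℕ → ℕ → ℝ≥0∞ := fun N k => ∑ j ∈ Finset.range N, g j k
  have hS : Monotone fun N k => S N k ^ q.toReal := fun M N hMN k =>
    ENNReal.rpow_le_rpow (Finset.sum_le_sum_of_subset (Finset.range_subset_range.2 hMN)) hr.le
  have h_iSup : eLpNorm (fun k => ∑' j, g j k) q Measure.count =
      ⨆ N, eLpNorm (S N) q Measure.count := by
    simp only [eLpNorm_count_eq_tsum hq0 hq_top, ENNReal.tsum_eq_iSup_nat (f := fun j => g j _),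
      ENNReal.iSup_rpow_of_pos _ hr]
    rw [← lintegral_count, lintegral_iSup (fun _ => measurable_of_countable _) hS,
      ENNReal.iSup_rpow_of_pos _ (by positivity)]
    simp [lintegral_count, S]
  rw [h_iSup]
  refine iSup_le fun N => ?_
  calc eLpNorm (S N) q Measure.count
      ≤ ∑ j ∈ Finset.range N, eLpNorm (g j) q Measure.count := by
        simpa [S, Finset.sum_fn] using
          eLpNorm_sum_le (fun j _ => (measurable_of_countable (g j)).aestronglyMeasurable) hq
    _ ≤ ∑' j, eLpNorm (g j) q Measure.count := ENNReal.sum_le_tsum _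

lemma eLpNorm_indicator_Ici_eq_comp_add (N : ℕ) (u : ℕ → ℝ≥0∞) :
    eLpNorm ((Ici N).indicator u) q Measure.count =
      eLpNorm (fun k => u (k + N)) q Measure.count := by
  rw [eLpNorm_count_eq_comp (add_left_injective N)]
  · congr 1
    ext k
    simp
  · intro k hk
    refine indicator_of_notMem (fun hNk => hk ⟨k - N, ?_⟩) u
    simp only [mem_Ici] at hNk
    show k - N + N = k
    omega

lemma eLpNorm_indicator_Ici_comp_sub (d : ℕ) (u : ℕ → ℝ≥0∞) :
    eLpNorm ((Ici d).indicator fun k => u (k - d)) q Measure.count =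
      eLpNorm u q Measure.count := by
  rw [eLpNorm_count_eq_comp (add_left_injective d)]
  · congr 1
    ext k
    simp
  · intro k hk
    refine indicator_of_notMem (fun hdk => hk ⟨k - d, ?_⟩) _
    simp only [mem_Ici] at hdk
    show k - d + d = k
    omega

lemma tendsto_eLpNorm_indicator_Ici (hq0 : q ≠ 0) (hq : q ≠ ∞) {u : ℕ → ℝ≥0∞}
    (hu : eLpNorm u q Measure.count ≠ ∞) :
    Tendsto (fun N => eLpNorm ((Ici N).indicator u) q Measure.count) atTop (𝓝 0) := by
  have hr : 0 < q.toReal := ENNReal.toReal_pos hq0 hq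
  simp_rw [eLpNorm_indicator_Ici_eq_comp_add]
  simp only [eLpNorm_count_eq_tsum hq0 hq] at hu ⊢
  have hsum : ∑' k, u k ^ q.toReal ≠ ∞ := by
    intro h
    simp [h, hr] at hu
  have h := ((ENNReal.continuous_rpow_const (y := 1 / q.toReal)).tendsto 0).comp
    (ENNReal.tendsto_sum_nat_add _ hsum)
  rwa [ENNReal.zero_rpow_of_pos (by positivity)] at h

lemma eLpNorm_tsum_pow_mul_le (hq : 1 ≤ q) {ρ : ℝ≥0∞} (hρ : ρ ≠ ∞) (v : ℕ → ℕ → ℝ≥0∞) :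
    eLpNorm (fun k => ∑' d, ρ ^ d * v d k) q Measure.count ≤
      ∑' d, ρ ^ d * eLpNorm (v d) q Measure.count :=
  (eLpNorm_tsum_le hq _).trans
    (ENNReal.tsum_le_tsum fun _ => eLpNorm_count_const_mul_le (ENNReal.pow_ne_top hρ) _)

lemma tsum_pow_mul_le_of_le {ρ M : ℝ≥0∞} {w : ℕ → ℝ≥0∞} (hw : ∀ d, w d ≤ M) :
    ∑' d, ρ ^ d * w d ≤ (1 - ρ)⁻¹ * M := by
  calc ∑' d, ρ ^ d * w d ≤ ∑' d, ρ ^ d * M := ENNReal.tsum_le_tsum fun d => by gcongr; exact hw d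
    _ = (1 - ρ)⁻¹ * M := by rw [ENNReal.tsum_mul_right, ENNReal.tsum_geometric]

end SequenceNorm

/-- For `q < ∞` this is `ℓ^q`, for `q = ∞` it is `c₀` (see `vanishingTails_top_iff`). -/
def VanishingTails (q : ℝ≥0∞) (u : ℕ → ℝ≥0∞) : Prop :=
  eLpNorm u q Measure.count < ∞ ∧
    Tendsto (fun N => eLpNorm ((Ici N).indicator u) q Measure.count) atTop (𝓝 0)

section VanishingTails

variable {q : ℝ≥0∞} {u v : ℕ → ℝ≥0∞}

lemma vanishingTails_iff_of_ne_top (hq0 : q ≠ 0) (hq : q ≠ ∞) :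
    VanishingTails q u ↔ eLpNorm u q Measure.count < ∞ :=
  ⟨And.left, fun hu => ⟨hu, tendsto_eLpNorm_indicator_Ici hq0 hq hu.ne⟩⟩

lemma vanishingTails_top_iff (hu : ∀ k, u k ≠ ∞) :
    VanishingTails ∞ u ↔ Tendsto u atTop (𝓝 0) := by
  simp_rw [VanishingTails, eLpNorm_indicator_Ici_eq_comp_add, eLpNorm_count_top]
  constructor
  · rintro ⟨-, htail⟩
    exact tendsto_of_tendsto_of_tendsto_of_le_of_le tendsto_const_nhds htail (fun _ => zero_le)
      fun N => le_iSup (fun k => u (k + N)) 0 |>.trans_eq' (by simp)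
  · intro h
    have htail : Tendsto (fun N => ⨆ k, u (k + N)) atTop (𝓝 0) := by
      rw [ENNReal.tendsto_atTop_zero] at h ⊢
      intro ε hε
      obtain ⟨N, hN⟩ := h ε hε
      exact ⟨N, fun n hn => iSup_le fun k => hN _ (by omega)⟩
    refine ⟨?_, htail⟩
    -- `u` is at most `1` beyond some `N`, and finite before.
    obtain ⟨N, hN⟩ := (ENNReal.tendsto_atTop_zero.1 htail) 1 one_pos
    refine lt_of_le_of_lt (iSup_le fun k => ?_ : _ ≤ ∑ j ∈ Finset.range N, u j + 1)
      (ENNReal.add_lt_top.2 ⟨ENNReal.sum_lt_top.2 fun j _ => (hu j).lt_top, ENNReal.one_lt_top⟩)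
    rcases lt_or_ge k N with hk | hk
    · exact (Finset.single_le_sum (fun j _ => zero_le) (Finset.mem_range.2 hk)).trans le_self_add
    · calc u k = u (k - N + N) := by rw [Nat.sub_add_cancel hk]
        _ ≤ 1 := (le_iSup (fun j => u (j + N)) (k - N)).trans (hN N le_rfl)
        _ ≤ _ := le_add_self

lemma VanishingTails.mono (hu : VanishingTails q u) (hvu : v ≤ u) : VanishingTails q v := by
  refine ⟨(eLpNorm_mono_enorm fun k => hvu k).trans_lt hu.1,
    tendsto_of_tendsto_of_tendsto_of_le_of_le tendsto_const_nhds hu.2 (fun _ => zero_le)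
      fun N => eLpNorm_mono_enorm fun k => ?_⟩
  simpa using indicator_le_indicator (s := Ici N) (hvu k)

lemma VanishingTails.indicator_Ici (hu : VanishingTails q u) (N : ℕ) :
    VanishingTails q ((Ici N).indicator u) :=
  hu.mono (indicator_le_self _ _)

lemma VanishingTails.add (hq : 1 ≤ q) (hu : VanishingTails q u) (hv : VanishingTails q v) :
    VanishingTails q (u + v) := by
  refine ⟨(eLpNorm_count_add_le hq u v).trans_lt (ENNReal.add_lt_top.2 ⟨hu.1, hv.1⟩), ?_⟩
  refine tendsto_of_tendsto_of_tendsto_of_le_of_le tendsto_const_nhds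
    (by simpa using hu.2.add hv.2) (fun _ => zero_le) fun N => ?_
  simpa [indicator_add'] using eLpNorm_count_add_le hq ((Ici N).indicator u) ((Ici N).indicator v)

lemma VanishingTails.const_mul {c : ℝ≥0∞} (hc : c ≠ ∞) (hu : VanishingTails q u) :
    VanishingTails q (fun k => c * u k) := by
  refine ⟨(eLpNorm_count_const_mul_le hc u).trans_lt (ENNReal.mul_lt_top hc.lt_top hu.1), ?_⟩
  refine tendsto_of_tendsto_of_tendsto_of_le_of_le tendsto_const_nhds
    (by simpa using ENNReal.Tendsto.const_mul hu.2 (Or.inr hc)) (fun _ => zero_le) fun N => ?_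
  have hind : (Ici N).indicator (fun k => c * u k) = fun k => c * (Ici N).indicator u k := by
    ext k
    simp [indicator_apply]
  simpa [hind] using eLpNorm_count_const_mul_le hc ((Ici N).indicator u)

end VanishingTails

section GeometricConvolution

variable {q ρ : ℝ≥0∞}

noncomputable def bwdConv (ρ : ℝ≥0∞) (u : ℕ → ℝ≥0∞) (k : ℕ) : ℝ≥0∞ :=
  ∑' d, ρ ^ d * u (k + d)

noncomputable def fwdConv (ρ : ℝ≥0∞) (u : ℕ → ℝ≥0∞) (k : ℕ) : ℝ≥0∞ :=
  ∑ j ∈ Finset.range (k + 1), ρ ^ (k - j) * u j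

lemma bwdConv_mono {u v : ℕ → ℝ≥0∞} (huv : u ≤ v) : bwdConv ρ u ≤ bwdConv ρ v :=
  fun k => ENNReal.tsum_le_tsum fun d => by gcongr; exact huv _

lemma eLpNorm_bwdConv_le (hq : 1 ≤ q) (hρ : ρ < 1) (u : ℕ → ℝ≥0∞) :
    eLpNorm (bwdConv ρ u) q Measure.count ≤ (1 - ρ)⁻¹ * eLpNorm u q Measure.count :=
  (eLpNorm_tsum_pow_mul_le hq hρ.ne_top fun d k => u (k + d)).trans <|
    tsum_pow_mul_le_of_le fun d => eLpNorm_count_comp_le (add_left_injective d) u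

lemma indicator_Ici_bwdConv_le (N : ℕ) (u : ℕ → ℝ≥0∞) :
    (Ici N).indicator (bwdConv ρ u) ≤ bwdConv ρ ((Ici N).indicator u) := by
  intro k
  by_cases hk : N ≤ k
  · rw [indicator_of_mem (mem_Ici.2 hk)]
    refine ENNReal.tsum_le_tsum fun d => ?_
    rw [indicator_of_mem (mem_Ici.2 (by omega))]
  · simp [hk]

lemma fwdConv_eq_tsum (u : ℕ → ℝ≥0∞) (k : ℕ) :
    fwdConv ρ u k = ∑' d, ρ ^ d * (Ici d).indicator (fun k => u (k - d)) k := by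
  rw [fwdConv, ← Finset.sum_range_reflect, tsum_eq_sum (s := Finset.range (k + 1))]
  · refine Finset.sum_congr rfl fun d hd => ?_
    have hdk : d ≤ k := Nat.lt_succ_iff.1 (Finset.mem_range.1 hd)
    rw [indicator_of_mem (mem_Ici.2 hdk)]
    congr 2
    omega
  · intro d hd
    rw [indicator_of_notMem (by simp at hd ⊢; omega), mul_zero]

lemma eLpNorm_fwdConv_le (hq : 1 ≤ q) (hρ : ρ < 1) (u : ℕ → ℝ≥0∞) :
    eLpNorm (fwdConv ρ u) q Measure.count ≤ (1 - ρ)⁻¹ * eLpNorm u q Measure.count := by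
  simp_rw [funext (fwdConv_eq_tsum (ρ := ρ) u)]
  exact (eLpNorm_tsum_pow_mul_le hq hρ.ne_top _).trans <|
    tsum_pow_mul_le_of_le fun d => (eLpNorm_indicator_Ici_comp_sub d u).le

lemma indicator_Ici_fwdConv_le (N : ℕ) (u : ℕ → ℝ≥0∞) (k : ℕ) :
    (Ici N).indicator (fwdConv ρ u) k ≤
      ∑' d, ρ ^ d * (Ici d).indicator (fun k => (Ici (N - d)).indicator u (k - d)) k := by
  by_cases hk : N ≤ k
  · rw [indicator_of_mem (mem_Ici.2 hk), fwdConv_eq_tsum]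
    refine ENNReal.tsum_le_tsum fun d => ?_
    by_cases hd : d ≤ k
    · simp only [indicator_of_mem (mem_Ici.2 hd)]
      rw [indicator_of_mem (mem_Ici.2 (by omega))]
    · simp [hd]
  · simp [hk]

lemma pow_mul_le_fwdConv {t k : ℕ} (htk : t ≤ k) (u : ℕ → ℝ≥0∞) :
    ρ ^ (k - t) * u t ≤ fwdConv ρ u k :=
  Finset.single_le_sum (f := fun j => ρ ^ (k - j) * u j) (fun _ _ => zero_le)
    (Finset.mem_range.2 (by omega))

lemma VanishingTails.bwdConv {u : ℕ → ℝ≥0∞} (hq : 1 ≤ q) (hρ : ρ < 1)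
    (hu : VanishingTails q u) : VanishingTails q (bwdConv ρ u) := by
  refine ⟨(eLpNorm_bwdConv_le hq hρ u).trans_lt
    (ENNReal.mul_lt_top (ENNReal.inv_one_sub_ne_top hρ).lt_top hu.1), ?_⟩
  refine tendsto_of_tendsto_of_tendsto_of_le_of_le tendsto_const_nhds
    (by simpa using ENNReal.Tendsto.const_mul hu.2 (Or.inr (ENNReal.inv_one_sub_ne_top hρ)))
    (fun _ => zero_le) fun N => ?_
  exact (eLpNorm_mono_enorm fun k => by simpa using indicator_Ici_bwdConv_le N u k).trans
    (eLpNorm_bwdConv_le hq hρ _)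

lemma VanishingTails.fwdConv {u : ℕ → ℝ≥0∞} (hq : 1 ≤ q) (hρ : ρ < 1)
    (hu : VanishingTails q u) : VanishingTails q (fwdConv ρ u) := by
  refine ⟨(eLpNorm_fwdConv_le hq hρ u).trans_lt
    (ENNReal.mul_lt_top (ENNReal.inv_one_sub_ne_top hρ).lt_top hu.1), ?_⟩
  -- The `N`-th tail of `fwdConv ρ u` is at most `∑_d ρ^d ‖(N - d)-th tail of u‖`, and each term
  -- of this series tends to `0`, under the summable bound `ρ^d ‖u‖`.
  have hdom : Tendsto
      (fun N => ∑' d, ρ ^ d * eLpNorm ((Ici (N - d)).indicator u) q Measure.count)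
      atTop (𝓝 (∑' _ : ℕ, 0)) := by
    refine ENNReal.tendsto_tsum_of_dominated
      (bound := fun d => ρ ^ d * eLpNorm u q Measure.count) (fun N d => ?_) ?_ fun d => ?_
    · gcongr
      exact eLpNorm_mono_enorm fun k => by simpa using indicator_le_self _ u k
    · rw [ENNReal.tsum_mul_right, ENNReal.tsum_geometric]
      exact ENNReal.mul_ne_top (ENNReal.inv_one_sub_ne_top hρ) hu.1.ne
    · simpa using ENNReal.Tendsto.const_mul (hu.2.comp (tendsto_sub_atTop_nat d))
        (Or.inr (ENNReal.pow_ne_top hρ.ne_top))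
  refine tendsto_of_tendsto_of_tendsto_of_le_of_le tendsto_const_nhds (by simpa using hdom)
    (fun _ => zero_le) fun N => ?_
  refine (eLpNorm_mono_enorm (g := fun k => ∑' d, ρ ^ d *
    (Ici d).indicator (fun k => (Ici (N - d)).indicator u (k - d)) k)
    fun k => by simpa using indicator_Ici_fwdConv_le N u k).trans ?_
  refine (eLpNorm_tsum_pow_mul_le hq hρ.ne_top _).trans_eq ?_
  simp_rw [eLpNorm_indicator_Ici_comp_sub]

end GeometricConvolution

namespace IsPseudoNorm

variable {E : Type*} [AddCommGroup E] [Module ℝ E] {N : E → ℝ}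

lemma map_zero (hN : IsPseudoNorm N) : N 0 = 0 := (hN.eq_zero_iff 0).2 rfl

lemma sub_le (hN : IsPseudoNorm N) (x y : E) : N (x - y) ≤ N x + N y := by
  simpa [sub_eq_add_neg, hN.neg] using hN.add_le x (-y)

lemma le_sub_add (hN : IsPseudoNorm N) (x y : E) : N x ≤ N (x - y) + N y := by
  simpa using hN.add_le (x - y) y

lemma sub_le_sub_add_sub (hN : IsPseudoNorm N) (x y z : E) :
    N (x - z) ≤ N (x - y) + N (y - z) := by
  simpa using hN.add_le (x - y) (y - z)

end IsPseudoNorm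

section SigmaWeight

variable {E : Type*} {N : E → ℝ}

noncomputable def sigmaWeight (N : E → ℝ) (s : ℝ) (f : ℕ → E) (k : ℕ) : ℝ≥0∞ :=
  ENNReal.ofReal (2 ^ ((k : ℝ) * s) * N (f k))

lemma sigmaNorm_eq_eLpNorm {q : ℝ≥0∞} (hq : q ≠ 0) (s : ℝ) (f : ℕ → E) :
    sigmaNorm N s q f = eLpNorm (sigmaWeight N s f) q Measure.count := by
  unfold sigmaNorm
  split_ifs with h
  · rw [h, eLpNorm_count_top]
    rfl
  · rw [eLpNorm_count_eq_tsum hq h]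
    rfl

lemma sigmaNorm_one (s : ℝ) (f : ℕ → E) : sigmaNorm N s 1 f = ∑' k, sigmaWeight N s f k := by
  simp [sigmaNorm_eq_eLpNorm one_ne_zero, eLpNorm_count_eq_tsum one_ne_zero ENNReal.one_ne_top]

lemma sigmaWeight_le_sigmaNorm_top (s : ℝ) (f : ℕ → E) (k : ℕ) :
    sigmaWeight N s f k ≤ sigmaNorm N s ∞ f := by
  rw [sigmaNorm_eq_eLpNorm ENNReal.top_ne_zero, eLpNorm_count_top]
  exact le_iSup (sigmaWeight N s f) k

lemma memSigma_iff_vanishingTails (hN : ∀ x, 0 ≤ N x) {q : ℝ≥0∞} (hq : 1 ≤ q) (s : ℝ)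
    (f : ℕ → E) : memSigma N s q f ↔ VanishingTails q (sigmaWeight N s f) := by
  have hq0 : q ≠ 0 := (zero_lt_one.trans_le hq).ne'
  unfold memSigma
  split_ifs with h
  · subst h
    rw [vanishingTails_top_iff (u := sigmaWeight N s f) fun _ => ENNReal.ofReal_ne_top]
    unfold sigmaWeight
    have hnn : ∀ k : ℕ, 0 ≤ (2 : ℝ) ^ ((k : ℝ) * s) * N (f k) :=
      fun k => mul_nonneg (by positivity) (hN _)
    constructor
    · intro h
      simpa using ENNReal.tendsto_ofReal h
    · intro h
      simpa [Function.comp_def, ENNReal.toReal_ofReal (hnn _)] using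
        (ENNReal.tendsto_toReal ENNReal.zero_ne_top).comp h
  · rw [vanishingTails_iff_of_ne_top hq0 h, sigmaNorm_eq_eLpNorm hq0]

lemma sigmaWeight_le_add {s : ℝ} {u v w : ℕ → E} {k : ℕ} (h : N (u k) ≤ N (v k) + N (w k)) :
    sigmaWeight N s u k ≤ sigmaWeight N s v k + sigmaWeight N s w k := by
  refine (ENNReal.ofReal_le_ofReal ?_).trans ENNReal.ofReal_add_le
  rw [← mul_add]
  exact mul_le_mul_of_nonneg_left h (by positivity)

lemma sigmaWeight_eq_two_rpow_mul (σ τ : ℝ) (f : ℕ → E) (k : ℕ) :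
    sigmaWeight N τ f k = 2 ^ ((k : ℝ) * (τ - σ)) * sigmaWeight N σ f k := by
  rw [sigmaWeight, sigmaWeight, ← ENNReal.ofReal_ofNat 2, ENNReal.ofReal_rpow_of_pos two_pos,
    ← ENNReal.ofReal_mul (by positivity), ← mul_assoc, ← Real.rpow_add two_pos]
  ring_nf

variable [AddCommGroup E] [Module ℝ E]

lemma sigmaWeight_smoothS (hN : IsPseudoNorm N) (s : ℝ) (f : ℕ → E) (n : ℕ) :
    sigmaWeight N s (smoothS n f) = (Iic n).indicator (sigmaWeight N s f) := by
  ext k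
  by_cases hk : k ≤ n <;> simp [sigmaWeight, smoothS, hk, hN.map_zero]

lemma sigmaWeight_sub_smoothS (hN : IsPseudoNorm N) (s : ℝ) (f : ℕ → E) (n : ℕ) :
    sigmaWeight N s (f - smoothS n f) = (Ici (n + 1)).indicator (sigmaWeight N s f) := by
  ext k
  by_cases hk : k ≤ n
  · simp [sigmaWeight, smoothS, hk, hN.map_zero, show ¬ n + 1 ≤ k by omega]
  · simp [sigmaWeight, smoothS, hk, show n + 1 ≤ k by omega]

lemma sigmaNorm_smoothS_le (hN : IsPseudoNorm N) {q : ℝ≥0∞} (hq : q ≠ 0) (s : ℝ) (f : ℕ → E)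
    (n : ℕ) : sigmaNorm N s q (smoothS n f) ≤ sigmaNorm N s q f := by
  rw [sigmaNorm_eq_eLpNorm hq, sigmaNorm_eq_eLpNorm hq, sigmaWeight_smoothS hN]
  exact eLpNorm_mono_enorm fun k => by simpa using indicator_le_self _ _ k

lemma memSigma_smoothS (hN : IsPseudoNorm N) {q : ℝ≥0∞} (hq : 1 ≤ q) {s : ℝ} {f : ℕ → E}
    (hf : memSigma N s q f) (n : ℕ) : memSigma N s q (smoothS n f) := by
  rw [memSigma_iff_vanishingTails hN.nonneg hq] at hf ⊢
  rw [sigmaWeight_smoothS hN]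
  exact hf.mono (indicator_le_self _ _)

lemma sigmaNorm_one_smoothS (hN : IsPseudoNorm N) (s : ℝ) (f : ℕ → E) (n : ℕ) :
    sigmaNorm N s 1 (smoothS n f) = ∑ j ∈ Finset.range (n + 1), sigmaWeight N s f j := by
  rw [sigmaNorm_one, sigmaWeight_smoothS hN, tsum_eq_sum (s := Finset.range (n + 1))]
  · refine Finset.sum_congr rfl fun j hj => indicator_of_mem ?_ _
    simpa [Nat.lt_succ_iff] using hj
  · intro j hj
    exact indicator_of_notMem (by simpa [Nat.lt_succ_iff] using hj) _

lemma memSigma_one_smoothS (hN : IsPseudoNorm N) (σ : ℝ) (f : ℕ → E) (n : ℕ) :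
    memSigma N σ 1 (smoothS n f) := by
  rw [memSigma, if_neg ENNReal.one_ne_top, sigmaNorm_one_smoothS hN]
  exact ENNReal.sum_lt_top.2 fun _ _ => ENNReal.ofReal_lt_top

end SigmaWeight

noncomputable def truncationBound (c₀ c₁ ρ₀ ρ₁ : ℝ≥0∞) (a : ℕ → ℝ≥0∞) (n k : ℕ) : ℝ≥0∞ :=
  c₀ * bwdConv ρ₀ ((Ici (n + 1)).indicator a) k +
    2 * c₁ * fwdConv ρ₁ ((Ici n).indicator (fwdConv ρ₁ a)) k

section TruncationBound

variable {q c₀ c₁ ρ₀ ρ₁ : ℝ≥0∞} {a : ℕ → ℝ≥0∞}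

lemma VanishingTails.truncationBound (hq : 1 ≤ q) (hρ₀ : ρ₀ < 1) (hρ₁ : ρ₁ < 1) (hc₀ : c₀ ≠ ∞)
    (hc₁ : c₁ ≠ ∞) (ha : VanishingTails q a) (n : ℕ) :
    VanishingTails q (truncationBound c₀ c₁ ρ₀ ρ₁ a n) :=
  (((ha.indicator_Ici _).bwdConv hq hρ₀).const_mul hc₀).add hq
    ((((ha.fwdConv hq hρ₁).indicator_Ici _).fwdConv hq hρ₁).const_mul
      (ENNReal.mul_ne_top ENNReal.ofNat_ne_top hc₁))

lemma eLpNorm_truncationBound_le (hq : 1 ≤ q) (hρ₀ : ρ₀ < 1) (hρ₁ : ρ₁ < 1) (hc₀ : c₀ ≠ ∞)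
    (hc₁ : c₁ ≠ ∞) (n : ℕ) :
    eLpNorm (truncationBound c₀ c₁ ρ₀ ρ₁ a n) q Measure.count ≤
      c₀ * ((1 - ρ₀)⁻¹ * eLpNorm ((Ici (n + 1)).indicator a) q Measure.count) +
        2 * c₁ * ((1 - ρ₁)⁻¹ * eLpNorm ((Ici n).indicator (fwdConv ρ₁ a)) q Measure.count) := by
  refine (eLpNorm_count_add_le hq _ _).trans (add_le_add ?_ ?_)
  · exact (eLpNorm_count_const_mul_le hc₀ _).trans (by gcongr; exact eLpNorm_bwdConv_le hq hρ₀ _)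
  · exact (eLpNorm_count_const_mul_le (ENNReal.mul_ne_top ENNReal.ofNat_ne_top hc₁) _).trans
      (by gcongr; exact eLpNorm_fwdConv_le hq hρ₁ _)

lemma tendsto_eLpNorm_truncationBound (hq : 1 ≤ q) (hρ₀ : ρ₀ < 1) (hρ₁ : ρ₁ < 1)
    (hc₀ : c₀ ≠ ∞) (hc₁ : c₁ ≠ ∞) (ha : VanishingTails q a) :
    Tendsto (fun n => eLpNorm (truncationBound c₀ c₁ ρ₀ ρ₁ a n) q Measure.count) atTop (𝓝 0) := by
  have hlim := (ENNReal.Tendsto.const_mul (ENNReal.Tendsto.const_mul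
    (ha.2.comp (tendsto_add_atTop_nat 1)) (Or.inr (ENNReal.inv_one_sub_ne_top hρ₀)))
      (Or.inr hc₀)).add
    (ENNReal.Tendsto.const_mul (ENNReal.Tendsto.const_mul (ha.fwdConv hq hρ₁).2
      (Or.inr (ENNReal.inv_one_sub_ne_top hρ₁)))
        (Or.inr (ENNReal.mul_ne_top (ENNReal.ofNat_ne_top (n := 2)) hc₁)))
  simp only [mul_zero, add_zero] at hlim
  exact tendsto_of_tendsto_of_tendsto_of_le_of_le tendsto_const_nhds hlim (fun _ => zero_le)
    fun n => eLpNorm_truncationBound_le hq hρ₀ hρ₁ hc₀ hc₁ n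

end TruncationBound

section Estimates

variable {E F : Type*} [AddCommGroup E] [Module ℝ E] {NE : E → ℝ} {NF : F → ℝ} {s₀ s s₁ : ℝ}
  {f : ℕ → E} {c : ℝ≥0∞}

lemma sigmaWeight_le_bwdConv (hNE : IsPseudoNorm NE) {x : ℕ → F} {M k : ℕ} (hk : k ≤ M + 1)
    (hx : sigmaNorm NF s₀ ∞ x ≤ c * sigmaNorm NE s₀ 1 (f - smoothS M f)) :
    sigmaWeight NF s x k ≤
      c * bwdConv (2 ^ (s₀ - s)) ((Ici (M + 1)).indicator (sigmaWeight NE s f)) k := by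
  have hsum : (2 : ℝ≥0∞) ^ ((k : ℝ) * (s - s₀)) * sigmaNorm NE s₀ 1 (f - smoothS M f) =
      bwdConv (2 ^ (s₀ - s)) ((Ici (M + 1)).indicator (sigmaWeight NE s f)) k := by
    rw [sigmaNorm_one, sigmaWeight_sub_smoothS hNE, ← ENNReal.tsum_mul_left,
      ← (add_right_injective k).tsum_eq]
    · refine tsum_congr fun d => ?_
      by_cases hd : M + 1 ≤ k + d
      · simp only [indicator_of_mem (mem_Ici.2 hd), sigmaWeight_eq_two_rpow_mul s s₀ f,
          ← mul_assoc, ENNReal.two_rpow_mul_two_rpow_eq_pow (Nat.le_add_right k d),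
          Nat.add_sub_cancel_left]
      · simp [indicator_of_notMem (notMem_Ici.2 (not_le.1 hd))]
    · intro j hj
      have hkj : k ≤ j := by
        by_contra hjk
        simp only [Function.mem_support, indicator_apply, mem_Ici] at hj
        exact hj (by rw [if_neg (by omega), mul_zero])
      exact ⟨j - k, by dsimp only; omega⟩
  calc sigmaWeight NF s x k = 2 ^ ((k : ℝ) * (s - s₀)) * sigmaWeight NF s₀ x k :=
        sigmaWeight_eq_two_rpow_mul s₀ s x k
    _ ≤ 2 ^ ((k : ℝ) * (s - s₀)) * (c * sigmaNorm NE s₀ 1 (f - smoothS M f)) := by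
        gcongr
        exact (sigmaWeight_le_sigmaNorm_top s₀ x k).trans hx
    _ = _ := by rw [mul_left_comm, hsum]

lemma sigmaWeight_le_fwdConv (hNE : IsPseudoNorm NE) {y : ℕ → F} {n t k : ℕ} (hnt : n ≤ t)
    (htk : t ≤ k) (hy : sigmaNorm NF s₁ ∞ y ≤ c * sigmaNorm NE s₁ 1 (smoothS t f)) :
    sigmaWeight NF s y k ≤ c * fwdConv (2 ^ (s - s₁))
      ((Ici n).indicator (fwdConv (2 ^ (s - s₁)) (sigmaWeight NE s f))) k := by
  set ρ : ℝ≥0∞ := 2 ^ (s - s₁)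
  have hsum : (2 : ℝ≥0∞) ^ ((k : ℝ) * (s - s₁)) * sigmaNorm NE s₁ 1 (smoothS t f) =
      ρ ^ (k - t) * fwdConv ρ (sigmaWeight NE s f) t := by
    rw [sigmaNorm_one_smoothS hNE, fwdConv, Finset.mul_sum, Finset.mul_sum]
    refine Finset.sum_congr rfl fun j hj => ?_
    have hjt : j ≤ t := Nat.lt_succ_iff.1 (Finset.mem_range.1 hj)
    rw [sigmaWeight_eq_two_rpow_mul s s₁ f, ← mul_assoc, mul_comm (2 ^ _),
      ENNReal.two_rpow_mul_two_rpow_eq_pow (hjt.trans htk), ← mul_assoc, ← pow_add]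
    congr 2
    omega
  calc sigmaWeight NF s y k = 2 ^ ((k : ℝ) * (s - s₁)) * sigmaWeight NF s₁ y k :=
        sigmaWeight_eq_two_rpow_mul s₁ s y k
    _ ≤ 2 ^ ((k : ℝ) * (s - s₁)) * (c * sigmaNorm NE s₁ 1 (smoothS t f)) := by
        gcongr
        exact (sigmaWeight_le_sigmaNorm_top s₁ y k).trans hy
    _ = c * (ρ ^ (k - t) * fwdConv ρ (sigmaWeight NE s f) t) := by rw [mul_left_comm, hsum]
    _ ≤ _ := by
        gcongr
        simpa [indicator_of_mem (mem_Ici.2 hnt)] using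
          pow_mul_le_fwdConv (ρ := ρ) htk ((Ici n).indicator (fwdConv ρ (sigmaWeight NE s f)))

variable [AddCommGroup F] [Module ℝ F] {Φ : (ℕ → E) → (ℕ → F)} {c₀ c₁ : ℝ≥0∞}

lemma sigmaWeight_sub_smoothS_le_truncationBound (hNE : IsPseudoNorm NE)
    (hNF : IsPseudoNorm NF)
    (hlip : ∀ M, sigmaNorm NF s₀ ∞ (Φ f - Φ (smoothS M f)) ≤
      c₀ * sigmaNorm NE s₀ 1 (f - smoothS M f))
    (htame : ∀ t, sigmaNorm NF s₁ ∞ (Φ (smoothS t f)) ≤ c₁ * sigmaNorm NE s₁ 1 (smoothS t f))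
    (n k : ℕ) :
    sigmaWeight NF s (Φ f - Φ (smoothS n f)) k ≤
      truncationBound c₀ c₁ (2 ^ (s₀ - s)) (2 ^ (s - s₁)) (sigmaWeight NE s f) n k := by
  rcases le_or_gt k (n + 1) with hk | hk
  · exact (sigmaWeight_le_bwdConv hNE hk (hlip n)).trans le_self_add
  -- At a high frequency `k`, pass through `S_{k-1} f`, whose low frequencies reach up to `k`.
  set W := (Ici n).indicator (fwdConv (2 ^ (s - s₁)) (sigmaWeight NE s f))
  calc sigmaWeight NF s (Φ f - Φ (smoothS n f)) k
      ≤ sigmaWeight NF s (Φ f - Φ (smoothS (k - 1) f)) k +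
          (sigmaWeight NF s (Φ (smoothS (k - 1) f)) k + sigmaWeight NF s (Φ (smoothS n f)) k) :=
        (sigmaWeight_le_add (hNF.sub_le_sub_add_sub _ (Φ (smoothS (k - 1) f) k) _)).trans
          (add_le_add_right (sigmaWeight_le_add
            (u := Φ (smoothS (k - 1) f) - Φ (smoothS n f)) (hNF.sub_le _ _)) _)
    _ ≤ c₀ * bwdConv (2 ^ (s₀ - s)) ((Ici (n + 1)).indicator (sigmaWeight NE s f)) k +
          (c₁ * fwdConv (2 ^ (s - s₁)) W k + c₁ * fwdConv (2 ^ (s - s₁)) W k) := by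
        gcongr
        · refine (sigmaWeight_le_bwdConv hNE (by omega) (hlip (k - 1))).trans ?_
          gcongr
          exact bwdConv_mono (indicator_le_indicator_of_subset (Ici_subset_Ici.2 (by omega))
            fun _ => zero_le) k
        · exact sigmaWeight_le_fwdConv hNE (by omega) (by omega) (htame _)
        · exact sigmaWeight_le_fwdConv hNE le_rfl (by omega) (htame _)
    _ = _ := by rw [truncationBound, ← two_mul, mul_assoc]

lemma sigmaWeight_le_truncationBound_add (hNE : IsPseudoNorm NE) (hNF : IsPseudoNorm NF)
    (hlip : ∀ M, sigmaNorm NF s₀ ∞ (Φ f - Φ (smoothS M f)) ≤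
      c₀ * sigmaNorm NE s₀ 1 (f - smoothS M f))
    (htame : ∀ t, sigmaNorm NF s₁ ∞ (Φ (smoothS t f)) ≤ c₁ * sigmaNorm NE s₁ 1 (smoothS t f))
    (k : ℕ) :
    sigmaWeight NF s (Φ f) k ≤
      truncationBound c₀ c₁ (2 ^ (s₀ - s)) (2 ^ (s - s₁)) (sigmaWeight NE s f) 0 k +
        c₁ * fwdConv (2 ^ (s - s₁))
          ((Ici 0).indicator (fwdConv (2 ^ (s - s₁)) (sigmaWeight NE s f))) k :=
  (sigmaWeight_le_add (hNF.le_sub_add _ (Φ (smoothS 0 f) k))).trans <| add_le_add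
    (sigmaWeight_sub_smoothS_le_truncationBound hNE hNF hlip htame 0 k)
    (sigmaWeight_le_fwdConv hNE le_rfl (Nat.zero_le k) (htame 0))

end Estimates

theorem Phi_mem_and_tendsto_sigma_general
    {E F : Type*} [AddCommGroup E] [Module ℝ E] [AddCommGroup F] [Module ℝ F]
    (NE : E → ℝ) (NF : F → ℝ) (hNE : IsPseudoNorm NE) (hNF : IsPseudoNorm NF)
    (s₀ s s₁ : ℝ) (hs₀ : s₀ < s) (hs₁ : s < s₁)
    (q : ℝ≥0∞) (hq : 1 ≤ q) (r : ℝ)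
    (Φ : (ℕ → E) → (ℕ → F))
    (C₀ : ℝ)
    (hlip : ∀ v w, memSigma NE s q v → sigmaNorm NE s q v < ENNReal.ofReal r →
      memSigma NE s q w → sigmaNorm NE s q w < ENNReal.ofReal r →
      sigmaNorm NF s₀ ⊤ (Φ v - Φ w) ≤ ENNReal.ofReal C₀ * sigmaNorm NE s₀ 1 (v - w))
    (C₁ : ℝ)
    (htame : ∀ v, (∀ σ : ℝ, memSigma NE σ 1 v) →
      memSigma NE s q v → sigmaNorm NE s q v < ENNReal.ofReal r →
      sigmaNorm NF s₁ ⊤ (Φ v) ≤ ENNReal.ofReal C₁ * sigmaNorm NE s₁ 1 v)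
    (f : ℕ → E) (hfmem : memSigma NE s q f)
    (hfball : sigmaNorm NE s q f < ENNReal.ofReal r) :
    memSigma NF s q (Φ f) ∧
    (∀ n : ℕ, memSigma NE s q (smoothS n f) ∧
      sigmaNorm NE s q (smoothS n f) < ENNReal.ofReal r) ∧
    Tendsto (fun n : ℕ => sigmaNorm NF s q (Φ f - Φ (smoothS n f))) atTop (nhds 0) := by
  have hq0 : q ≠ 0 := (zero_lt_one.trans_le hq).ne'
  have hS : ∀ n, memSigma NE s q (smoothS n f) ∧
      sigmaNorm NE s q (smoothS n f) < ENNReal.ofReal r :=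
    fun n => ⟨memSigma_smoothS hNE hq hfmem n, (sigmaNorm_smoothS_le hNE hq0 s f n).trans_lt hfball⟩
  have hlip' := fun M => hlip f _ hfmem hfball (hS M).1 (hS M).2
  have htame' := fun t => htame _ (memSigma_one_smoothS hNE · f t) (hS t).1 (hS t).2
  have hρ₀ : (2 : ℝ≥0∞) ^ (s₀ - s) < 1 :=
    ENNReal.rpow_lt_one_of_one_lt_of_neg ENNReal.one_lt_two (by linarith)
  have hρ₁ : (2 : ℝ≥0∞) ^ (s - s₁) < 1 :=
    ENNReal.rpow_lt_one_of_one_lt_of_neg ENNReal.one_lt_two (by linarith)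
  have ha := (memSigma_iff_vanishingTails hNE.nonneg hq s f).1 hfmem
  refine ⟨?_, hS, ?_⟩
  · rw [memSigma_iff_vanishingTails hNF.nonneg hq]
    refine VanishingTails.mono ?_ (sigmaWeight_le_truncationBound_add hNE hNF hlip' htame')
    exact (ha.truncationBound hq hρ₀ hρ₁ ENNReal.ofReal_ne_top ENNReal.ofReal_ne_top 0).add hq
      ((((ha.fwdConv hq hρ₁).indicator_Ici 0).fwdConv hq hρ₁).const_mul ENNReal.ofReal_ne_top)
  · simp_rw [sigmaNorm_eq_eLpNorm hq0]
    refine tendsto_of_tendsto_of_tendsto_of_le_of_le tendsto_const_nhds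
      (tendsto_eLpNorm_truncationBound (c₀ := ENNReal.ofReal C₀) (c₁ := ENNReal.ofReal C₁) hq hρ₀
        hρ₁ ENNReal.ofReal_ne_top ENNReal.ofReal_ne_top ha)
      (fun _ => zero_le) fun n => eLpNorm_mono_enorm fun k => ?_
    simpa using sigmaWeight_sub_smoothS_le_truncationBound hNE hNF hlip' htame' n k

/-- Proposition 3.7: under the weak Lipschitz and tame estimates, for every
`f ∈ B_{s,q}(0,r)`, `Φ(f)` belongs to `Σ^s_q(F)`, the elements `Φ(S_n f)` are
well-defined (each `S_n f` lies in the ball), and `Φ(S_n f) → Φ(f)` in `Σ^s_q(F)`. -/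
theorem Phi_mem_and_tendsto_sigma
    {E F : Type*} [AddCommGroup E] [Module ℝ E] [AddCommGroup F] [Module ℝ F]
    (NE : E → ℝ) (NF : F → ℝ) (hNE : IsPseudoNorm NE) (hNF : IsPseudoNorm NF)
    (s₀ s s₁ : ℝ) (hs₀ : s₀ < s) (hs₁ : s < s₁)
    (q : ℝ≥0∞) (hq : 1 ≤ q) (r : ℝ) (hr : 0 < r)
    (Φ : (ℕ → E) → (ℕ → F))
    (hΦmem : ∀ v, memSigma NE s q v → sigmaNorm NE s q v < ENNReal.ofReal r →
      memSigma NF s₀ ⊤ (Φ v))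
    (C₀ : ℝ) (hC₀ : 0 < C₀)
    (hlip : ∀ v w, memSigma NE s q v → sigmaNorm NE s q v < ENNReal.ofReal r →
      memSigma NE s q w → sigmaNorm NE s q w < ENNReal.ofReal r →
      sigmaNorm NF s₀ ⊤ (Φ v - Φ w) ≤ ENNReal.ofReal C₀ * sigmaNorm NE s₀ 1 (v - w))
    (C₁ : ℝ) (hC₁ : 0 < C₁)
    (htame : ∀ v, (∀ σ : ℝ, memSigma NE σ 1 v) →
      memSigma NE s q v → sigmaNorm NE s q v < ENNReal.ofReal r →
      sigmaNorm NF s₁ ⊤ (Φ v) ≤ ENNReal.ofReal C₁ * sigmaNorm NE s₁ 1 v)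
    (f : ℕ → E) (hfmem : memSigma NE s q f)
    (hfball : sigmaNorm NE s q f < ENNReal.ofReal r) :
    memSigma NF s q (Φ f) ∧
    (∀ n : ℕ, memSigma NE s q (smoothS n f) ∧
      sigmaNorm NE s q (smoothS n f) < ENNReal.ofReal r) ∧
    Tendsto (fun n : ℕ => sigmaNorm NF s q (Φ f - Φ (smoothS n f))) atTop (nhds 0) :=
  Phi_mem_and_tendsto_sigma_general NE NF hNE hNF s₀ s s₁ hs₀ hs₁ q hq r Φ C₀ hlip C₁ htame f hfmem
    hfball
end

section
/- Let (F,‖·‖_F) be a pseudo-normed real vector space and s_0 < s_1 real numbers. For all s ∈ (s_0,s_1) and all q ∈ [1,∞] there exists a constant C > 0 such that for all f ∈ Σ^{s_1}_∞(F): ‖f‖_{Σ^s_q} ≤ C ‖f‖_{Σ^{s_0}_∞}^θ ‖f‖_{Σ^{s_1}_∞}^{1−θ}, where θ = (s_1 − s)/(s_1 − s_0); in particular f ∈ Σ^s_q(F). -/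
/-!
Write `a_k = 2^{ks} ‖f_k‖` and `M_i = ‖f‖_{Σ^{s_i}_∞}`. Then `a_k ≤ M₀ 2^{k(s-s₀)}` and
`a_k ≤ M₁ 2^{-k(s₁-s)}`, and the minimum of these two bounds is at most their weighted geometric
mean, which for the weight `θ` no longer depends on `k` and equals `M₀^θ M₁^{1-θ}`; this is the
case `q = ∞`. For `q < ∞` the first bound grows and the second decays geometrically, so splitting
the sum at the index where the second bound becomes the smaller one leaves two geometric series,
each dominated by a constant times its largest term, which is again at most `M₀^θ M₁^{1-θ}`.
-/

open Filter
open scoped ENNReal NNReal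

open Topology

lemma min_le_rpow_mul_rpow {u v θ : ℝ} (hu : 0 ≤ u) (hv : 0 ≤ v) (hθ₀ : 0 ≤ θ) (hθ₁ : θ ≤ 1) :
    min u v ≤ u ^ θ * v ^ (1 - θ) := by
  have hm : 0 ≤ min u v := le_min hu hv
  calc min u v = min u v ^ θ * min u v ^ (1 - θ) := by
        rw [← Real.rpow_add' hm (by norm_num), add_sub_cancel, Real.rpow_one]
    _ ≤ u ^ θ * v ^ (1 - θ) := by
        gcongr
        · exact min_le_left u v
        · exact min_le_right u v

section Geometric

variable {a b θ x y : ℝ}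

lemma rpow_rpow_mul_rpow_rpow (ha : 0 ≤ a) (hb : 0 ≤ b) (r : ℝ) :
    (a ^ r) ^ θ * (b ^ r) ^ (1 - θ) = (a ^ θ * b ^ (1 - θ)) ^ r := by
  rw [← Real.rpow_mul ha, mul_comm r, Real.rpow_mul ha, ← Real.rpow_mul hb, mul_comm r,
    Real.rpow_mul hb, ← Real.mul_rpow (by positivity) (by positivity)]

lemma rpow_le_rpow_mul_rpow_pow {c : ℝ} (hc : 0 ≤ c) (hx : 0 ≤ x) (ha : 0 ≤ a) {r : ℝ}
    (hr : 0 ≤ r) {k : ℕ} (h : c ≤ x * a ^ k) : c ^ r ≤ x ^ r * (a ^ r) ^ k := by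
  rw [Real.rpow_pow_comm ha, ← Real.mul_rpow hx (by positivity)]
  exact Real.rpow_le_rpow hc h hr

lemma min_mul_pow_le (ha : 0 ≤ a) (hb : 0 ≤ b) (hθ₀ : 0 ≤ θ) (hθ₁ : θ ≤ 1)
    (hab : a ^ θ * b ^ (1 - θ) = 1) (hx : 0 ≤ x) (hy : 0 ≤ y) (k : ℕ) :
    min (x * a ^ k) (y * b ^ k) ≤ x ^ θ * y ^ (1 - θ) :=
  calc min (x * a ^ k) (y * b ^ k) ≤ (x * a ^ k) ^ θ * (y * b ^ k) ^ (1 - θ) :=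
        min_le_rpow_mul_rpow (by positivity) (by positivity) hθ₀ hθ₁
    _ = x ^ θ * y ^ (1 - θ) * (a ^ θ * b ^ (1 - θ)) ^ k := by
        rw [Real.mul_rpow hx (by positivity), Real.mul_rpow hy (by positivity), mul_pow,
          Real.rpow_pow_comm ha, Real.rpow_pow_comm hb]
        ring
    _ = x ^ θ * y ^ (1 - θ) := by rw [hab, one_pow, mul_one]

lemma sum_range_mul_pow_le (ha : 1 < a) (hx : 0 ≤ x) {X : ℝ} (hX : 0 ≤ X) {K : ℕ}
    (h : ∀ k < K, x * a ^ k ≤ X) : ∑ k ∈ Finset.range K, x * a ^ k ≤ a / (a - 1) * X := by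
  have ha₁ : 0 < a - 1 := sub_pos.2 ha
  cases K with
  | zero =>
    exact (Finset.sum_range_zero _).trans_le (mul_nonneg (div_nonneg (by linarith) ha₁.le) hX)
  | succ K =>
    rw [← Finset.mul_sum, geom_sum_eq ha.ne']
    calc x * ((a ^ (K + 1) - 1) / (a - 1)) ≤ x * (a ^ (K + 1) / (a - 1)) := by
          gcongr
          linarith
      _ = a / (a - 1) * (x * a ^ K) := by ring
      _ ≤ a / (a - 1) * X := by
          gcongr
          exact h K K.lt_add_one

lemma tsum_ofReal_min_mul_pow_le (ha : 1 < a) (hb₀ : 0 < b) (hb₁ : b < 1) (hθ₀ : 0 ≤ θ)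
    (hθ₁ : θ ≤ 1) (hab : a ^ θ * b ^ (1 - θ) = 1) (hx : 0 ≤ x) (hy : 0 ≤ y) :
    ∑' k : ℕ, ENNReal.ofReal (min (x * a ^ k) (y * b ^ k)) ≤
      ENNReal.ofReal ((a / (a - 1) + (1 - b)⁻¹) * (x ^ θ * y ^ (1 - θ))) := by
  set X := x ^ θ * y ^ (1 - θ)
  have hX : 0 ≤ X := by positivity
  have hC : 0 ≤ a / (a - 1) + (1 - b)⁻¹ := by
    have := sub_pos.2 ha; have := sub_pos.2 hb₁; positivity
  have hz : ∀ k : ℕ, 0 ≤ min (x * a ^ k) (y * b ^ k) := fun k =>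
    le_min (by positivity) (by positivity)
  have hmin := min_mul_pow_le (by linarith) hb₀.le hθ₀ hθ₁ hab hx hy
  have hsum : Summable fun k : ℕ => min (x * a ^ k) (y * b ^ k) :=
    ((summable_geometric_of_lt_one hb₀.le hb₁).mul_left y).of_nonneg_of_le hz
      fun k => min_le_right _ _
  rw [← ENNReal.ofReal_tsum_of_nonneg hz hsum]
  refine ENNReal.ofReal_le_ofReal ?_
  rcases hx.eq_or_lt with rfl | hx₀
  · have hzero : ∀ k : ℕ, min (0 * a ^ k) (y * b ^ k) = 0 := fun k => by
      rw [zero_mul]; exact min_eq_left (by positivity)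
    simp only [hzero, tsum_zero]
    exact mul_nonneg hC hX
  have hex : ∃ k : ℕ, y * b ^ k ≤ x * a ^ k := by
    have hgrow : Tendsto (fun k : ℕ => x * a ^ k) atTop atTop :=
      (tendsto_pow_atTop_atTop_of_one_lt ha).const_mul_atTop hx₀
    obtain ⟨k, hk⟩ := (hgrow.eventually_ge_atTop y).exists
    exact ⟨k, (mul_le_of_le_one_right hy (pow_le_one₀ hb₀.le hb₁.le)).trans hk⟩
  set K := Nat.find hex
  have hhead : ∀ k < K, x * a ^ k ≤ X := fun k hk =>
    (min_eq_left (not_le.1 (Nat.find_min hex hk)).le).symm.trans_le (hmin k)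
  have hKX : y * b ^ K ≤ X := (min_eq_right (Nat.find_spec hex)).symm.trans_le (hmin K)
  have htail : ∑' k : ℕ, min (x * a ^ (k + K)) (y * b ^ (k + K)) ≤ X * (1 - b)⁻¹ :=
    calc ∑' k : ℕ, min (x * a ^ (k + K)) (y * b ^ (k + K))
        ≤ ∑' k : ℕ, y * b ^ K * b ^ k :=
          Summable.tsum_le_tsum (fun k => (min_le_right _ _).trans_eq (by ring))
            ((summable_nat_add_iff K).2 hsum)
            ((summable_geometric_of_lt_one hb₀.le hb₁).mul_left _)
      _ = y * b ^ K * (1 - b)⁻¹ := by rw [tsum_mul_left, tsum_geometric_of_lt_one hb₀.le hb₁]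
      _ ≤ X * (1 - b)⁻¹ := by gcongr
  calc ∑' k : ℕ, min (x * a ^ k) (y * b ^ k)
      = ∑ k ∈ Finset.range K, min (x * a ^ k) (y * b ^ k)
          + ∑' k : ℕ, min (x * a ^ (k + K)) (y * b ^ (k + K)) := (hsum.sum_add_tsum_nat_add K).symm
    _ ≤ a / (a - 1) * X + X * (1 - b)⁻¹ :=
        add_le_add ((Finset.sum_le_sum fun k _ => min_le_left _ _).trans
          (sum_range_mul_pow_le ha hx hX hhead)) htail
    _ = (a / (a - 1) + (1 - b)⁻¹) * X := by ring

end Geometric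

lemma ofReal_toReal_rpow_mul_rpow {M₀ M₁ : ℝ≥0∞} (h₀ : M₀ ≠ ⊤) (h₁ : M₁ ≠ ⊤) {θ : ℝ}
    (hθ₀ : 0 ≤ θ) (hθ₁ : θ ≤ 1) :
    ENNReal.ofReal (M₀.toReal ^ θ * M₁.toReal ^ (1 - θ)) = M₀ ^ θ * M₁ ^ (1 - θ) := by
  rw [ENNReal.ofReal_mul (by positivity),
    ← ENNReal.ofReal_rpow_of_nonneg ENNReal.toReal_nonneg hθ₀,
    ← ENNReal.ofReal_rpow_of_nonneg ENNReal.toReal_nonneg (sub_nonneg.2 hθ₁),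
    ENNReal.ofReal_toReal h₀, ENNReal.ofReal_toReal h₁]

lemma two_rpow_sub_rpow_mul_two_rpow_sub_rpow {s₀ s₁ s θ : ℝ}
    (hθ : θ * s₀ + (1 - θ) * s₁ = s) :
    ((2 : ℝ) ^ (s - s₀)) ^ θ * ((2 : ℝ) ^ (s - s₁)) ^ (1 - θ) = 1 := by
  rw [← Real.rpow_mul zero_le_two, ← Real.rpow_mul zero_le_two,
    ← Real.rpow_add zero_lt_two, ← Real.rpow_zero 2]
  congr 1
  linear_combination -hθ

section SigmaNorm

variable {E : Type*} {N : E → ℝ} {s t : ℝ} {f : ℕ → E}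

lemma sigmaNorm_top_eq (N : E → ℝ) (s : ℝ) (f : ℕ → E) :
    sigmaNorm N s ⊤ f = ⨆ k : ℕ, ENNReal.ofReal ((2 : ℝ) ^ ((k : ℝ) * s) * N (f k)) :=
  if_pos rfl

lemma sigmaNorm_of_ne_top {q : ℝ≥0∞} (hq : q ≠ ⊤) :
    sigmaNorm N s q f =
      (∑' k : ℕ, ENNReal.ofReal ((2 : ℝ) ^ ((k : ℝ) * s) * N (f k)) ^ q.toReal) ^ (1 / q.toReal) :=
  if_neg hq

lemma memSigma_top_iff :
    memSigma N s ⊤ f ↔ Tendsto (fun k : ℕ => (2 : ℝ) ^ ((k : ℝ) * s) * N (f k)) atTop (𝓝 0) :=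
  Iff.of_eq (if_pos rfl)

lemma memSigma_iff_of_ne_top {q : ℝ≥0∞} (hq : q ≠ ⊤) :
    memSigma N s q f ↔ sigmaNorm N s q f < ⊤ :=
  Iff.of_eq (if_neg hq)

lemma ofReal_le_sigmaNorm_top (k : ℕ) :
    ENNReal.ofReal ((2 : ℝ) ^ ((k : ℝ) * s) * N (f k)) ≤ sigmaNorm N s ⊤ f :=
  (le_iSup (fun k : ℕ => ENNReal.ofReal ((2 : ℝ) ^ ((k : ℝ) * s) * N (f k))) k).trans_eq
    (sigmaNorm_top_eq N s f).symm

lemma two_rpow_mul_le_of_le (hN : ∀ x, 0 ≤ N x) (hst : s ≤ t) (k : ℕ) :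
    (2 : ℝ) ^ ((k : ℝ) * s) * N (f k) ≤ (2 : ℝ) ^ ((k : ℝ) * t) * N (f k) := by
  have := hN (f k)
  gcongr
  norm_num

lemma sigmaNorm_top_mono (hN : ∀ x, 0 ≤ N x) (hst : s ≤ t) :
    sigmaNorm N s ⊤ f ≤ sigmaNorm N t ⊤ f := by
  rw [sigmaNorm_top_eq N s]
  exact iSup_le fun k =>
    (ENNReal.ofReal_le_ofReal (two_rpow_mul_le_of_le hN hst k)).trans (ofReal_le_sigmaNorm_top k)

lemma memSigma_top_anti (hN : ∀ x, 0 ≤ N x) (hst : s ≤ t) (hf : memSigma N t ⊤ f) :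
    memSigma N s ⊤ f :=
  memSigma_top_iff.2 <| squeeze_zero (fun k => mul_nonneg (by positivity) (hN _))
    (two_rpow_mul_le_of_le hN hst) (memSigma_top_iff.1 hf)

lemma sigmaNorm_top_ne_top (hf : memSigma N s ⊤ f) : sigmaNorm N s ⊤ f ≠ ⊤ := by
  obtain ⟨B, hB⟩ := (memSigma_top_iff.1 hf).bddAbove_range
  refine ne_top_of_le_ne_top (ENNReal.ofReal_ne_top (r := B)) ?_
  rw [sigmaNorm_top_eq]
  exact iSup_le fun k => ENNReal.ofReal_le_ofReal (hB ⟨k, rfl⟩)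

lemma two_rpow_mul_le_toReal_mul_pow (hf : sigmaNorm N t ⊤ f ≠ ⊤) (k : ℕ) :
    (2 : ℝ) ^ ((k : ℝ) * s) * N (f k) ≤ (sigmaNorm N t ⊤ f).toReal * ((2 : ℝ) ^ (s - t)) ^ k := by
  have hk : (2 : ℝ) ^ ((k : ℝ) * t) * N (f k) ≤ (sigmaNorm N t ⊤ f).toReal :=
    (ENNReal.ofReal_le_iff_le_toReal hf).1 (ofReal_le_sigmaNorm_top k)
  calc (2 : ℝ) ^ ((k : ℝ) * s) * N (f k)
      = ((2 : ℝ) ^ (s - t)) ^ k * ((2 : ℝ) ^ ((k : ℝ) * t) * N (f k)) := by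
        rw [← Real.rpow_mul_natCast zero_le_two, ← mul_assoc, ← Real.rpow_add zero_lt_two]
        ring_nf
    _ ≤ (sigmaNorm N t ⊤ f).toReal * ((2 : ℝ) ^ (s - t)) ^ k := by
        rw [mul_comm]
        gcongr

end SigmaNorm

section Interpolation

variable {E : Type*} {N : E → ℝ} {s₀ s₁ s θ : ℝ}

theorem sigmaNorm_top_le_rpow_mul_rpow (hθ : θ * s₀ + (1 - θ) * s₁ = s) (hθ₀ : 0 ≤ θ)
    (hθ₁ : θ ≤ 1) {f : ℕ → E} (h₀ : sigmaNorm N s₀ ⊤ f ≠ ⊤) (h₁ : sigmaNorm N s₁ ⊤ f ≠ ⊤) :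
    sigmaNorm N s ⊤ f ≤ sigmaNorm N s₀ ⊤ f ^ θ * sigmaNorm N s₁ ⊤ f ^ (1 - θ) := by
  rw [sigmaNorm_top_eq, ← ofReal_toReal_rpow_mul_rpow h₀ h₁ hθ₀ hθ₁]
  exact iSup_le fun k => ENNReal.ofReal_le_ofReal <|
    (le_min (two_rpow_mul_le_toReal_mul_pow h₀ k) (two_rpow_mul_le_toReal_mul_pow h₁ k)).trans
      (min_mul_pow_le (by positivity) (by positivity) hθ₀ hθ₁
        (two_rpow_sub_rpow_mul_two_rpow_sub_rpow hθ) ENNReal.toReal_nonneg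
        ENNReal.toReal_nonneg k)

theorem exists_sigmaNorm_le_rpow_mul_rpow_of_ne_top (hN : ∀ x, 0 ≤ N x)
    (hθ : θ * s₀ + (1 - θ) * s₁ = s) (hθ₀ : 0 ≤ θ) (hθ₁ : θ ≤ 1) (hs₀ : s₀ < s) (hs₁ : s < s₁)
    {q : ℝ≥0∞} (hq : q ≠ ⊤) (hq₀ : q ≠ 0) :
    ∃ C > 0, ∀ f : ℕ → E, sigmaNorm N s₀ ⊤ f ≠ ⊤ → sigmaNorm N s₁ ⊤ f ≠ ⊤ →
      sigmaNorm N s q f ≤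
        ENNReal.ofReal C * sigmaNorm N s₀ ⊤ f ^ θ * sigmaNorm N s₁ ⊤ f ^ (1 - θ) := by
  set r := q.toReal
  have hr : 0 < r := ENNReal.toReal_pos hq₀ hq
  set a := ((2 : ℝ) ^ (s - s₀)) ^ r
  set b := ((2 : ℝ) ^ (s - s₁)) ^ r
  have ha : 1 < a := Real.one_lt_rpow (Real.one_lt_rpow one_lt_two (sub_pos.2 hs₀)) hr
  have hb₀ : 0 < b := by positivity
  have hb₁ : b < 1 :=
    Real.rpow_lt_one (by positivity)
      (Real.rpow_lt_one_of_one_lt_of_neg one_lt_two (sub_neg.2 hs₁)) hr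
  have hab : a ^ θ * b ^ (1 - θ) = 1 := by
    rw [rpow_rpow_mul_rpow_rpow (by positivity) (by positivity),
      two_rpow_sub_rpow_mul_two_rpow_sub_rpow hθ, Real.one_rpow]
  set C := a / (a - 1) + (1 - b)⁻¹
  have hC : 0 < C := by
    have := sub_pos.2 ha; have := sub_pos.2 hb₁; positivity
  refine ⟨C ^ (1 / r), by positivity, fun f h₀ h₁ => ?_⟩
  set m₀ := (sigmaNorm N s₀ ⊤ f).toReal
  set m₁ := (sigmaNorm N s₁ ⊤ f).toReal
  have hterm : ∀ k : ℕ, ENNReal.ofReal ((2 : ℝ) ^ ((k : ℝ) * s) * N (f k)) ^ r ≤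
      ENNReal.ofReal (min (m₀ ^ r * a ^ k) (m₁ ^ r * b ^ k)) := by
    intro k
    have hc : 0 ≤ (2 : ℝ) ^ ((k : ℝ) * s) * N (f k) := mul_nonneg (by positivity) (hN _)
    rw [ENNReal.ofReal_rpow_of_nonneg hc hr.le]
    exact ENNReal.ofReal_le_ofReal (le_min
      (rpow_le_rpow_mul_rpow_pow hc ENNReal.toReal_nonneg (by positivity) hr.le
        (two_rpow_mul_le_toReal_mul_pow h₀ k))
      (rpow_le_rpow_mul_rpow_pow hc ENNReal.toReal_nonneg (by positivity) hr.le
        (two_rpow_mul_le_toReal_mul_pow h₁ k)))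
  calc sigmaNorm N s q f
      = (∑' k : ℕ, ENNReal.ofReal ((2 : ℝ) ^ ((k : ℝ) * s) * N (f k)) ^ r) ^ (1 / r) :=
        sigmaNorm_of_ne_top hq
    _ ≤ ENNReal.ofReal (C * ((m₀ ^ r) ^ θ * (m₁ ^ r) ^ (1 - θ))) ^ (1 / r) := by
        gcongr
        exact (ENNReal.tsum_le_tsum hterm).trans
          (tsum_ofReal_min_mul_pow_le ha hb₀ hb₁ hθ₀ hθ₁ hab (by positivity) (by positivity))
    _ = ENNReal.ofReal (C ^ (1 / r) * (m₀ ^ θ * m₁ ^ (1 - θ))) := by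
        rw [ENNReal.ofReal_rpow_of_nonneg (by positivity) (by positivity),
          rpow_rpow_mul_rpow_rpow (by positivity) (by positivity),
          Real.mul_rpow hC.le (by positivity), one_div, Real.rpow_rpow_inv (by positivity) hr.ne']
    _ = ENNReal.ofReal (C ^ (1 / r)) * sigmaNorm N s₀ ⊤ f ^ θ *
          sigmaNorm N s₁ ⊤ f ^ (1 - θ) := by
        rw [ENNReal.ofReal_mul (by positivity), ofReal_toReal_rpow_mul_rpow h₀ h₁ hθ₀ hθ₁, mul_assoc]

theorem exists_sigmaNorm_le_rpow_mul_rpow (hN : ∀ x, 0 ≤ N x)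
    (hθ : θ * s₀ + (1 - θ) * s₁ = s) (hθ₀ : 0 ≤ θ) (hθ₁ : θ ≤ 1) (hs₀ : s₀ < s) (hs₁ : s < s₁)
    {q : ℝ≥0∞} (hq₀ : q ≠ 0) :
    ∃ C > 0, ∀ f : ℕ → E, sigmaNorm N s₀ ⊤ f ≠ ⊤ → sigmaNorm N s₁ ⊤ f ≠ ⊤ →
      sigmaNorm N s q f ≤
        ENNReal.ofReal C * sigmaNorm N s₀ ⊤ f ^ θ * sigmaNorm N s₁ ⊤ f ^ (1 - θ) := by
  by_cases hq : q = ⊤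
  · subst hq
    refine ⟨1, one_pos, fun f h₀ h₁ => ?_⟩
    rw [ENNReal.ofReal_one, one_mul]
    exact sigmaNorm_top_le_rpow_mul_rpow hθ hθ₀ hθ₁ h₀ h₁
  · exact exists_sigmaNorm_le_rpow_mul_rpow_of_ne_top hN hθ hθ₀ hθ₁ hs₀ hs₁ hq hq₀

end Interpolation

/-- Lemma 3.11 (interpolation inequality): for `s₀ < s < s₁` and `q ∈ [1,∞]` there is a
constant `C > 0` such that for every `f ∈ Σ^{s₁}_∞(F)`,
`‖f‖_{Σ^s_q} ≤ C ‖f‖_{Σ^{s₀}_∞}^θ ‖f‖_{Σ^{s₁}_∞}^{1-θ}` with `θ = (s₁-s)/(s₁-s₀)`;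
in particular `f ∈ Σ^s_q(F)`. -/
theorem sigmaNorm_interpolation {F : Type*} [AddCommGroup F] [Module ℝ F]
    (N : F → ℝ) (hN : IsPseudoNorm N) (s₀ s₁ : ℝ) (h : s₀ < s₁)
    (s : ℝ) (hs₀ : s₀ < s) (hs₁ : s < s₁) (q : ℝ≥0∞) (hq : 1 ≤ q) :
    ∃ C : ℝ, 0 < C ∧
      ∀ f : ℕ → F, memSigma N s₁ ⊤ f →
        sigmaNorm N s q f ≤ ENNReal.ofReal C *
            sigmaNorm N s₀ ⊤ f ^ ((s₁ - s) / (s₁ - s₀)) *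
            sigmaNorm N s₁ ⊤ f ^ (1 - (s₁ - s) / (s₁ - s₀)) ∧
        memSigma N s q f := by
  set θ := (s₁ - s) / (s₁ - s₀) with hθ_def
  have hd : 0 < s₁ - s₀ := sub_pos.2 h
  have hθ₀ : 0 < θ := div_pos (sub_pos.2 hs₁) hd
  have hθ₁ : θ < 1 := (div_lt_one hd).2 (by linarith)
  have hθ : θ * s₀ + (1 - θ) * s₁ = s := by
    rw [hθ_def]
    field_simp
    ring
  obtain ⟨C, hC, hle⟩ := exists_sigmaNorm_le_rpow_mul_rpow hN.nonneg hθ hθ₀.le hθ₁.le hs₀ hs₁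
    (one_pos.trans_le hq).ne'
  refine ⟨C, hC, fun f hf => ?_⟩
  have h₁ := sigmaNorm_top_ne_top hf
  have h₀ := ne_top_of_le_ne_top h₁ (sigmaNorm_top_mono hN.nonneg h.le)
  refine ⟨hle f h₀ h₁, ?_⟩
  by_cases hq_top : q = ⊤
  · subst hq_top
    exact memSigma_top_anti hN.nonneg hs₁.le hf
  · refine (memSigma_iff_of_ne_top hq_top).2 ((hle f h₀ h₁).trans_lt ?_)
    exact ENNReal.mul_lt_top (ENNReal.mul_lt_top ENNReal.ofReal_lt_top
      (ENNReal.rpow_lt_top_of_nonneg hθ₀.le h₀))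
      (ENNReal.rpow_lt_top_of_nonneg (by linarith) h₁)
end
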